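/- Under the setup of Theorem on E-optimality, the sharper bound ε(a,b) ≤ max over multisets A ⊆ B with |A|=a, |B|=b and u ∈ E of σ_max(H)^2 · λ_max[Y(B) - Y(A)] / λ_min[Y(A) + M_u]^2 holds, where Y(D) = R_θ^{-1} + ∑_{e∈D} M_e. -/

import Mathlib

open Matrix

/-- Maximum eigenvalue of a real symmetric matrix (0 if not Hermitian). -/
noncomputable def lmax {n : ℕ} (A : Matrix (Fin n) (Fin n) ℝ) : ℝ :=
  if h : A.IsHermitian then ⨆ i, h.eigenvalues i else 0

/-- Minimum eigenvalue of a real symmetric matrix (0 if not Hermitian). -/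
noncomputable def lmin {n : ℕ} (A : Matrix (Fin n) (Fin n) ℝ) : ℝ :=
  if h : A.IsHermitian then ⨅ i, h.eigenvalues i else 0

/-!
With `A = Y S + M u` and `Δ = Y T - Y S ⪰ 0`, antitonicity of the inverse gives `f T ≤ f S`, and
Weyl's inequality `λ_max P - λ_max Q ≤ λ_max (P - Q)` bounds `f (u ::ₘ S) - f (u ::ₘ T)` by
`λ_max (H (A⁻¹ - (A + Δ)⁻¹) Hᵀ)`. The variational formula
`y ⬝ A⁻¹ y = max_w (2 w ⬝ y - w ⬝ A w)` gives `A⁻¹ - (A + Δ)⁻¹ ⪯ A⁻¹ Δ A⁻¹`, whose quadratic form at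
`Hᵀ x` is at most `λ_max Δ ‖A⁻¹ Hᵀ x‖² ≤ λ_max Δ λ_max (H Hᵀ) ‖x‖² / λ_min A ²`.
-/

namespace Matrix

variable {ι : Type*} [Fintype ι] [DecidableEq ι]

theorem IsHermitian.exists_dotProduct_mulVec_eq_sum_eigenvalues {A : Matrix ι ι ℝ}
    (hA : A.IsHermitian) (x : ι → ℝ) :
    ∃ y : ι → ℝ, x ⬝ᵥ A *ᵥ x = ∑ i, hA.eigenvalues i * y i ^ 2 ∧ x ⬝ᵥ x = ∑ i, y i ^ 2 := by
  set U : Matrix ι ι ℝ := (hA.eigenvectorUnitary : Matrix ι ι ℝ)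
  have hUx : ∀ z, x ⬝ᵥ U *ᵥ z = (Uᵀ *ᵥ x) ⬝ᵥ z := fun z => by
    rw [dotProduct_mulVec, mulVec_transpose]
  have hx : U *ᵥ (Uᵀ *ᵥ x) = x := by
    rw [mulVec_mulVec, ← conjTranspose_eq_transpose_of_trivial,
      ← star_eq_conjTranspose, Unitary.mul_star_self_of_mem hA.eigenvectorUnitary.2, one_mulVec]
  refine ⟨Uᵀ *ᵥ x, ?_, ?_⟩
  · conv_lhs => rw [hA.spectral_theorem, Unitary.conjStarAlgAut_apply]
    rw [← mulVec_mulVec, ← mulVec_mulVec, hUx, star_eq_conjTranspose,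
      conjTranspose_eq_transpose_of_trivial]
    simp only [dotProduct, mulVec_diagonal, Function.comp_apply, RCLike.ofReal_real_eq_id, id_eq]
    exact Finset.sum_congr rfl fun i _ => by ring
  · conv_lhs => arg 2; rw [← hx]
    rw [hUx]
    simp only [dotProduct, sq]

theorem IsHermitian.dotProduct_mulVec_le_mul {A : Matrix ι ι ℝ} (hA : A.IsHermitian) {c : ℝ}
    (hc : ∀ i, hA.eigenvalues i ≤ c) (x : ι → ℝ) : x ⬝ᵥ A *ᵥ x ≤ c * (x ⬝ᵥ x) := by
  obtain ⟨y, hAx, hx⟩ := hA.exists_dotProduct_mulVec_eq_sum_eigenvalues x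
  rw [hAx, hx, Finset.mul_sum]
  exact Finset.sum_le_sum fun i _ => mul_le_mul_of_nonneg_right (hc i) (sq_nonneg _)

theorem IsHermitian.mul_le_dotProduct_mulVec {A : Matrix ι ι ℝ} (hA : A.IsHermitian) {c : ℝ}
    (hc : ∀ i, c ≤ hA.eigenvalues i) (x : ι → ℝ) : c * (x ⬝ᵥ x) ≤ x ⬝ᵥ A *ᵥ x := by
  obtain ⟨y, hAx, hx⟩ := hA.exists_dotProduct_mulVec_eq_sum_eigenvalues x
  rw [hAx, hx, Finset.mul_sum]
  exact Finset.sum_le_sum fun i _ => mul_le_mul_of_nonneg_right (hc i) (sq_nonneg _)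

theorem IsHermitian.exists_dotProduct_mulVec_eq_mul {A : Matrix ι ι ℝ} (hA : A.IsHermitian)
    (i : ι) : ∃ x : ι → ℝ, 0 < x ⬝ᵥ x ∧ x ⬝ᵥ A *ᵥ x = hA.eigenvalues i * (x ⬝ᵥ x) := by
  refine ⟨hA.eigenvectorBasis i, ?_, ?_⟩
  · have hne : (hA.eigenvectorBasis i : ι → ℝ) ≠ 0 := by
      simpa using hA.eigenvectorBasis.orthonormal.ne_zero i
    simpa using (dotProduct_star_self_pos_iff (v := (hA.eigenvectorBasis i : ι → ℝ))).2 hne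
  · rw [hA.mulVec_eigenvectorBasis, dotProduct_smul, smul_eq_mul]

end Matrix

namespace Matrix.PosDef

variable {ι : Type*} [Fintype ι] [DecidableEq ι] {A D : Matrix ι ι ℝ}

theorem mulVec_inv_mulVec (hA : A.PosDef) (y : ι → ℝ) : A *ᵥ (A⁻¹ *ᵥ y) = y := by
  rw [mulVec_mulVec, mul_nonsing_inv A (isUnit_iff_ne_zero.mpr hA.det_pos.ne'), one_mulVec]

theorem two_mul_dotProduct_sub_le (hA : A.PosDef) (y w : ι → ℝ) :
    2 * (w ⬝ᵥ y) - w ⬝ᵥ A *ᵥ w ≤ y ⬝ᵥ A⁻¹ *ᵥ y := by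
  set v := A⁻¹ *ᵥ y
  have hAv : A *ᵥ v = y := hA.mulVec_inv_mulVec y
  have hvAw : v ⬝ᵥ A *ᵥ w = w ⬝ᵥ y := by
    rw [dotProduct_mulVec, ← mulVec_transpose, ← conjTranspose_eq_transpose_of_trivial,
      hA.isHermitian.eq, hAv, dotProduct_comm]
  have hsq := hA.posSemidef.dotProduct_mulVec_nonneg (w - v)
  simp only [star_trivial, mulVec_sub, dotProduct_sub, sub_dotProduct, hAv,
    hvAw] at hsq
  have hvy : v ⬝ᵥ y = y ⬝ᵥ A⁻¹ *ᵥ y := dotProduct_comm _ _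
  linarith

theorem dotProduct_inv_add_mulVec_le (hA : A.PosDef) (hD : D.PosSemidef) (y : ι → ℝ) :
    y ⬝ᵥ (A + D)⁻¹ *ᵥ y ≤ y ⬝ᵥ A⁻¹ *ᵥ y := by
  set w := (A + D)⁻¹ *ᵥ y
  have hw : (A + D) *ᵥ w = y := (hA.add_posSemidef hD).mulVec_inv_mulVec y
  have hwy : w ⬝ᵥ y = w ⬝ᵥ A *ᵥ w + w ⬝ᵥ D *ᵥ w := by rw [← hw, add_mulVec, dotProduct_add]
  have hyw : y ⬝ᵥ (A + D)⁻¹ *ᵥ y = w ⬝ᵥ y := dotProduct_comm _ _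
  have hDw : 0 ≤ w ⬝ᵥ D *ᵥ w := by simpa using hD.dotProduct_mulVec_nonneg w
  linarith [hA.two_mul_dotProduct_sub_le y w]

theorem dotProduct_inv_mulVec_sub_inv_add_mulVec_le (hA : A.PosDef) (hD : D.PosSemidef)
    (y : ι → ℝ) :
    y ⬝ᵥ A⁻¹ *ᵥ y - y ⬝ᵥ (A + D)⁻¹ *ᵥ y ≤ (A⁻¹ *ᵥ y) ⬝ᵥ D *ᵥ (A⁻¹ *ᵥ y) := by
  set w := A⁻¹ *ᵥ y
  have hwy : w ⬝ᵥ y = y ⬝ᵥ A⁻¹ *ᵥ y := dotProduct_comm _ _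
  have hwBw : w ⬝ᵥ (A + D) *ᵥ w = y ⬝ᵥ A⁻¹ *ᵥ y + w ⬝ᵥ D *ᵥ w := by
    rw [add_mulVec, dotProduct_add, hA.mulVec_inv_mulVec y, hwy]
  linarith [(hA.add_posSemidef hD).two_mul_dotProduct_sub_le y w]

end Matrix.PosDef

theorem dotProduct_sq_le_dotProduct_self_mul {R ι : Type*} [CommRing R] [LinearOrder R]
    [IsStrictOrderedRing R] [Fintype ι] (u v : ι → R) :
    (u ⬝ᵥ v) ^ 2 ≤ (u ⬝ᵥ u) * (v ⬝ᵥ v) := by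
  simpa only [dotProduct, sq] using Finset.sum_mul_sq_le_sq_mul_sq Finset.univ u v

section Extremal

variable {n : ℕ}

theorem lmax_of_fin_zero (A : Matrix (Fin 0) (Fin 0) ℝ) : lmax A = 0 := by
  unfold lmax; split <;> simp

theorem dotProduct_mulVec_le_lmax_mul {A : Matrix (Fin n) (Fin n) ℝ} (hA : A.IsHermitian)
    (x : Fin n → ℝ) : x ⬝ᵥ A *ᵥ x ≤ lmax A * (x ⬝ᵥ x) := by
  rw [lmax, dif_pos hA]
  exact hA.dotProduct_mulVec_le_mul (le_ciSup (Set.finite_range _).bddAbove) x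

theorem lmin_mul_le_dotProduct_mulVec {A : Matrix (Fin n) (Fin n) ℝ} (hA : A.IsHermitian)
    (x : Fin n → ℝ) : lmin A * (x ⬝ᵥ x) ≤ x ⬝ᵥ A *ᵥ x := by
  rw [lmin, dif_pos hA]
  exact hA.mul_le_dotProduct_mulVec (ciInf_le (Set.finite_range _).bddBelow) x

theorem lmin_pos [NeZero n] {A : Matrix (Fin n) (Fin n) ℝ} (hA : A.PosDef) : 0 < lmin A := by
  rw [lmin, dif_pos hA.isHermitian]
  obtain ⟨i, hi⟩ := Finite.exists_min hA.isHermitian.eigenvalues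
  exact (hA.eigenvalues_pos i).trans_le (le_ciInf hi)

theorem lmax_nonneg {A : Matrix (Fin n) (Fin n) ℝ} (hA : A.PosSemidef) : 0 ≤ lmax A := by
  cases n with
  | zero => rw [lmax_of_fin_zero]
  | succ k =>
    rw [lmax, dif_pos hA.isHermitian]
    exact (hA.eigenvalues_nonneg 0).trans (le_ciSup (Set.finite_range _).bddAbove 0)

theorem Matrix.IsHermitian.exists_dotProduct_mulVec_eq_lmax_mul [NeZero n]
    {A : Matrix (Fin n) (Fin n) ℝ} (hA : A.IsHermitian) :
    ∃ x : Fin n → ℝ, 0 < x ⬝ᵥ x ∧ x ⬝ᵥ A *ᵥ x = lmax A * (x ⬝ᵥ x) := by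
  obtain ⟨i, hi⟩ := Finite.exists_max hA.eigenvalues
  have hlmax : lmax A = hA.eigenvalues i := by
    rw [lmax, dif_pos hA]
    exact le_antisymm (ciSup_le hi) (le_ciSup (Set.finite_range _).bddAbove i)
  rw [hlmax]
  exact hA.exists_dotProduct_mulVec_eq_mul i

theorem lmax_le_of_forall_dotProduct_mulVec_le {A : Matrix (Fin n) (Fin n) ℝ}
    (hA : A.IsHermitian) {c : ℝ} (hc : 0 ≤ c) (h : ∀ x, x ⬝ᵥ A *ᵥ x ≤ c * (x ⬝ᵥ x)) :
    lmax A ≤ c := by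
  cases n with
  | zero => rwa [lmax_of_fin_zero]
  | succ k =>
    obtain ⟨x, hx, hAx⟩ := hA.exists_dotProduct_mulVec_eq_lmax_mul
    exact le_of_mul_le_mul_right (hAx ▸ h x) hx

theorem lmax_le_lmax_of_forall_dotProduct_mulVec_le {A B : Matrix (Fin n) (Fin n) ℝ}
    (hA : A.IsHermitian) (hB : B.IsHermitian) (h : ∀ x, x ⬝ᵥ A *ᵥ x ≤ x ⬝ᵥ B *ᵥ x) :
    lmax A ≤ lmax B := by
  cases n with
  | zero => simp only [lmax_of_fin_zero, le_refl]
  | succ k =>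
    obtain ⟨x, hx, hAx⟩ := hA.exists_dotProduct_mulVec_eq_lmax_mul
    exact le_of_mul_le_mul_right (hAx ▸ (h x).trans (dotProduct_mulVec_le_lmax_mul hB x)) hx

theorem lmax_sub_le_lmax_sub {A B : Matrix (Fin n) (Fin n) ℝ} (hA : A.IsHermitian)
    (hB : B.IsHermitian) : lmax A - lmax B ≤ lmax (A - B) := by
  cases n with
  | zero => simp only [lmax_of_fin_zero, sub_self, le_refl]
  | succ k =>
    obtain ⟨x, hx, hAx⟩ := hA.exists_dotProduct_mulVec_eq_lmax_mul
    have hsplit : x ⬝ᵥ A *ᵥ x = x ⬝ᵥ (A - B) *ᵥ x + x ⬝ᵥ B *ᵥ x := by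
      rw [sub_mulVec, dotProduct_sub, sub_add_cancel]
    refine le_of_mul_le_mul_right ?_ hx
    rw [sub_mul, ← hAx, hsplit]
    linarith [dotProduct_mulVec_le_lmax_mul (hA.sub hB) x, dotProduct_mulVec_le_lmax_mul hB x]

end Extremal

theorem Matrix.PosDef.dotProduct_inv_mulVec_self_le {n : ℕ} {A : Matrix (Fin n) (Fin n) ℝ}
    (hA : A.PosDef) (y : Fin n → ℝ) :
    (A⁻¹ *ᵥ y) ⬝ᵥ (A⁻¹ *ᵥ y) ≤ y ⬝ᵥ y / lmin A ^ 2 := by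
  cases n with
  | zero => simp
  | succ k =>
    set u := A⁻¹ *ᵥ y
    have hu : lmin A * (u ⬝ᵥ u) ≤ u ⬝ᵥ y := by
      rw [← hA.mulVec_inv_mulVec y]
      exact lmin_mul_le_dotProduct_mulVec hA.isHermitian u
    have hc := lmin_pos hA
    rw [le_div_iff₀ (by positivity)]
    rcases (show 0 ≤ u ⬝ᵥ u by simpa using dotProduct_star_self_nonneg u).eq_or_lt with hu0 | hu0
    · rw [← hu0, zero_mul]
      simpa using dotProduct_star_self_nonneg y
    · refine le_of_mul_le_mul_left ?_ hu0
      calc (u ⬝ᵥ u) * ((u ⬝ᵥ u) * lmin A ^ 2) = (lmin A * (u ⬝ᵥ u)) ^ 2 := by ring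
        _ ≤ (u ⬝ᵥ y) ^ 2 := pow_le_pow_left₀ (by positivity) hu 2
        _ ≤ (u ⬝ᵥ u) * (y ⬝ᵥ y) := dotProduct_sq_le_dotProduct_self_mul u y

theorem Matrix.dotProduct_mul_mul_transpose_mulVec {R κ ι : Type*} [CommSemiring R] [Fintype κ]
    [Fintype ι] (H : Matrix κ ι R) (X : Matrix ι ι R) (x : κ → R) :
    x ⬝ᵥ (H * X * Hᵀ) *ᵥ x = (Hᵀ *ᵥ x) ⬝ᵥ X *ᵥ (Hᵀ *ᵥ x) := by
  rw [← mulVec_mulVec, ← mulVec_mulVec, dotProduct_mulVec, ← mulVec_transpose]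

theorem Matrix.IsHermitian.mul_mul_transpose {R κ ι : Type*} [CommSemiring R] [StarRing R]
    [TrivialStar R] [Fintype ι] (H : Matrix κ ι R) {X : Matrix ι ι R} (hX : X.IsHermitian) :
    (H * X * Hᵀ).IsHermitian := by
  simpa only [conjTranspose_eq_transpose_of_trivial] using isHermitian_mul_mul_conjTranspose H hX

section Conjugation

variable {m p : ℕ} (H : Matrix (Fin m) (Fin p) ℝ) {A D : Matrix (Fin p) (Fin p) ℝ}

theorem lmax_mul_inv_add_mul_transpose_le (hA : A.PosDef) (hD : D.PosSemidef) :
    lmax (H * (A + D)⁻¹ * Hᵀ) ≤ lmax (H * A⁻¹ * Hᵀ) := by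
  refine lmax_le_lmax_of_forall_dotProduct_mulVec_le
    ((hA.add_posSemidef hD).inv.isHermitian.mul_mul_transpose H)
    (hA.inv.isHermitian.mul_mul_transpose H) fun x => ?_
  simp only [dotProduct_mul_mul_transpose_mulVec]
  exact hA.dotProduct_inv_add_mulVec_le hD _

theorem lmax_mul_inv_mul_transpose_sub_le (hA : A.PosDef) (hD : D.PosSemidef) :
    lmax (H * A⁻¹ * Hᵀ) - lmax (H * (A + D)⁻¹ * Hᵀ) ≤ lmax (H * Hᵀ) * lmax D / lmin A ^ 2 := by
  have hHH : (H * Hᵀ).PosSemidef := by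
    simpa only [conjTranspose_eq_transpose_of_trivial] using posSemidef_self_mul_conjTranspose H
  refine (lmax_sub_le_lmax_sub (hA.inv.isHermitian.mul_mul_transpose H)
    ((hA.add_posSemidef hD).inv.isHermitian.mul_mul_transpose H)).trans ?_
  rw [← Matrix.sub_mul, ← Matrix.mul_sub]
  refine lmax_le_of_forall_dotProduct_mulVec_le
    ((hA.inv.isHermitian.sub (hA.add_posSemidef hD).inv.isHermitian).mul_mul_transpose H)
    (div_nonneg (mul_nonneg (lmax_nonneg hHH) (lmax_nonneg hD)) (sq_nonneg _)) fun x => ?_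
  have hHx : (Hᵀ *ᵥ x) ⬝ᵥ (Hᵀ *ᵥ x) ≤ lmax (H * Hᵀ) * (x ⬝ᵥ x) := by
    have h := dotProduct_mulVec_le_lmax_mul hHH.isHermitian x
    rwa [← mulVec_mulVec, dotProduct_mulVec, ← mulVec_transpose] at h
  set y := Hᵀ *ᵥ x
  calc x ⬝ᵥ (H * (A⁻¹ - (A + D)⁻¹) * Hᵀ) *ᵥ x
      = y ⬝ᵥ A⁻¹ *ᵥ y - y ⬝ᵥ (A + D)⁻¹ *ᵥ y := by
        rw [dotProduct_mul_mul_transpose_mulVec, sub_mulVec, dotProduct_sub]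
    _ ≤ (A⁻¹ *ᵥ y) ⬝ᵥ D *ᵥ (A⁻¹ *ᵥ y) := hA.dotProduct_inv_mulVec_sub_inv_add_mulVec_le hD y
    _ ≤ lmax D * ((A⁻¹ *ᵥ y) ⬝ᵥ (A⁻¹ *ᵥ y)) := dotProduct_mulVec_le_lmax_mul hD.isHermitian _
    _ ≤ lmax D * (y ⬝ᵥ y / lmin A ^ 2) := by
        gcongr
        · exact lmax_nonneg hD
        · exact hA.dotProduct_inv_mulVec_self_le y
    _ ≤ lmax D * (lmax (H * Hᵀ) * (x ⬝ᵥ x) / lmin A ^ 2) := by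
        gcongr
        exact lmax_nonneg hD
    _ = lmax (H * Hᵀ) * lmax D / lmin A ^ 2 * (x ⬝ᵥ x) := by ring

end Conjugation

theorem E_optimality_epsilon_sharper_bound_general
    {E : Type*} {p m : ℕ}
    (Rθ : Matrix (Fin p) (Fin p) ℝ) (hRθ : Rθ.PosDef)
    (M : E → Matrix (Fin p) (Fin p) ℝ) (hM : ∀ e, (M e).PosSemidef)
    (H : Matrix (Fin m) (Fin p) ℝ)
    (Y : Multiset E → Matrix (Fin p) (Fin p) ℝ)
    (hY : ∀ D : Multiset E, Y D = Rθ⁻¹ + (D.map M).sum)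
    (f : Multiset E → ℝ)
    (hf : ∀ D : Multiset E, f D = lmax (H * (Y D)⁻¹ * Hᵀ)) :
    ∀ (S T : Multiset E) (u : E), S ≤ T →
      f T - f (u ::ₘ T) - f S + f (u ::ₘ S) ≤
        lmax (H * Hᵀ) * lmax (Y T - Y S) / (lmin (Y S + M u)) ^ 2 := by
  intro S T u hST
  obtain ⟨R, rfl⟩ := Multiset.le_iff_exists_add.mp hST
  have hsum : ∀ D : Multiset E, ((D.map M).sum).PosSemidef := fun D =>
    Multiset.sum_induction _ _ (fun _ _ => PosSemidef.add) PosSemidef.zero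
      (by simpa using fun e _ => hM e)
  have hYS : (Y S).PosDef := hY S ▸ hRθ.inv.add_posSemidef (hsum S)
  have hY_add : ∀ D : Multiset E, Y (D + R) = Y D + (R.map M).sum := fun D => by
    rw [hY, hY, Multiset.map_add, Multiset.sum_add, add_assoc]
  have hYuS : Y (u ::ₘ S) = Y S + M u := by
    rw [hY, hY, Multiset.map_cons, Multiset.sum_cons, add_left_comm, add_comm (M u)]
  have hYuT : Y (u ::ₘ (S + R)) = Y S + M u + (R.map M).sum := by
    rw [← Multiset.cons_add, hY_add, hYuS]
  have hmono : f (S + R) ≤ f S := by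
    rw [hf, hf, hY_add]
    exact lmax_mul_inv_add_mul_transpose_le H hYS (hsum R)
  have hcross : f (u ::ₘ S) - f (u ::ₘ (S + R)) ≤
      lmax (H * Hᵀ) * lmax (Y (S + R) - Y S) / lmin (Y S + M u) ^ 2 := by
    rw [hf, hf, hYuS, hYuT, hY_add, add_sub_cancel_left]
    exact lmax_mul_inv_mul_transpose_sub_le H (hYS.add_posSemidef (hM u)) (hsum R)
  linarith

/-- Sharper bound on the supermodularity violation of the E-optimality objective:
for every A ⊆ B with |A| = a, |B| = b and every u,
`f(B) - f(B∪{u}) - f(A) + f(A∪{u}) ≤ σ_max(H)² λ_max[Y(B) - Y(A)] / λ_min[Y(A) + M_u]²`,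
hence ε(a,b) is bounded by the maximum of the right-hand side over such A, B, u. -/
theorem E_optimality_epsilon_sharper_bound
    {E : Type*} [Fintype E] {p m : ℕ}
    (Rθ : Matrix (Fin p) (Fin p) ℝ) (hRθ : Rθ.PosDef)
    (M : E → Matrix (Fin p) (Fin p) ℝ) (hM : ∀ e, (M e).PosSemidef)
    (H : Matrix (Fin m) (Fin p) ℝ)
    (Y : Multiset E → Matrix (Fin p) (Fin p) ℝ)
    (hY : ∀ D : Multiset E, Y D = Rθ⁻¹ + (D.map M).sum)
    (f : Multiset E → ℝ)
    (hf : ∀ D : Multiset E, f D = lmax (H * (Y D)⁻¹ * Hᵀ)) :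
    ∀ (S T : Multiset E) (u : E), S ≤ T →
      f T - f (u ::ₘ T) - f S + f (u ::ₘ S) ≤
        lmax (H * Hᵀ) * lmax (Y T - Y S) / (lmin (Y S + M u)) ^ 2 :=
  E_optimality_epsilon_sharper_bound_general Rθ hRθ M hM H Y hY f hf
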